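/- arXiv:2006.07292 — 2 statements merged into one kernel-verified Lean document; each statement's English description precedes it below -/
import Mathlib

section
/- Let Σ be a nonempty finite type and let μ be a probability measure on List Σ (the set of finite words over Σ, equipped with the discrete (⊤) σ-algebra). Let ε, δ ∈ (0,1) be real numbers, let m ≥ 1 be a natural number, and for each i ∈ {1,…,m} set r_i = ⌈(1/ε)(i·ln 2 − ln δ)⌉ (a natural number). Let T ⊆ List Σ be an arbitrary target language and let H_1,…,H_m ⊆ List Σ be arbitrary hypothesis languages. Let P be the product probability measure on Π_{i=1}^m (Fin r_i → List Σ) in which every coordinate is an independent draw from μ (i.e., Measure.pi applied to the measures Measure.pi (fun _ : Fin r_i => μ)). Then the P-measure of the event { ω | ∃ i ∈ {1,…,m}, μ(H_i Δ T) ≥ ε and for every k < r_i the k-th sample of round i, ω i k, lies outside H_i Δ T } is at most δ. (Here A Δ B denotes the symmetric difference (A \ B) ∪ (B \ A).) This is the PAC guarantee of LEXR: the probability that some hypothesis whose error μ(H_i Δ T) is at least ε nevertheless passes its entire round of r_i random tests is at most δ, so a returned explanation is an ε-explanation with probability at least 1 − δ. -/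
/-!
Union bound over the rounds. A hypothesis whose error `μ (H i ∆ T)` is at least `ε` passes the
`r_i` independent tests of its round with probability `(1 - μ (H i ∆ T)) ^ r_i ≤ (1 - ε) ^ r_i
≤ exp (-ε r_i) ≤ δ / 2 ^ i`, by the choice of `r_i`, and `∑ i, δ / 2 ^ i ≤ δ`.
-/

open MeasureTheory

/-- Words over the alphabet carry the discrete σ-algebra. -/
instance listDiscrete {α : Type*} : MeasurableSpace (List α) := ⊤

open Real

noncomputable def lexrTestSize (ε δ : ℝ) (i : ℕ) : ℕ :=
  ⌈(1 / ε) * ((i : ℝ) * log 2 - log δ)⌉₊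

lemma one_sub_pow_le_exp_neg {ε x : ℝ} {n : ℕ} (hε : ε ≤ 1) (hx : x ≤ ε * n) :
    (1 - ε) ^ n ≤ exp (-x) :=
  calc (1 - ε) ^ n ≤ exp (-ε) ^ n := pow_le_pow_left₀ (by linarith) (one_sub_le_exp_neg ε) n
    _ = exp (-(ε * n)) := by rw [← exp_nat_mul]; ring_nf
    _ ≤ exp (-x) := exp_le_exp.mpr (by linarith)

lemma one_sub_pow_lexrTestSize_le {ε δ : ℝ} (hε : ε ∈ Set.Ioo 0 1) (hδ : 0 < δ) (i : ℕ) :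
    (1 - ε) ^ lexrTestSize ε δ i ≤ δ / 2 ^ i := by
  have hsize : (i : ℝ) * log 2 - log δ ≤ ε * lexrTestSize ε δ i := by
    have hceil := Nat.le_ceil ((1 / ε) * ((i : ℝ) * log 2 - log δ))
    rw [one_div_mul_eq_div, div_le_iff₀ hε.1] at hceil
    rwa [lexrTestSize, mul_comm ε, one_div_mul_eq_div]
  calc (1 - ε) ^ lexrTestSize ε δ i ≤ exp (-((i : ℝ) * log 2 - log δ)) :=
        one_sub_pow_le_exp_neg hε.2.le hsize
    _ = δ / 2 ^ i := by rw [neg_sub, exp_sub, exp_log hδ, exp_nat_mul, exp_log two_pos]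

lemma ENNReal.one_sub_pow_lexrTestSize_le {ε δ : ℝ} (hε : ε ∈ Set.Ioo 0 1) (hδ : 0 < δ)
    {a : ENNReal} (ha : ENNReal.ofReal ε ≤ a) (i : ℕ) :
    (1 - a) ^ lexrTestSize ε δ i ≤ ENNReal.ofReal (δ / 2 ^ i) :=
  calc (1 - a) ^ lexrTestSize ε δ i ≤ (1 - ENNReal.ofReal ε) ^ lexrTestSize ε δ i := by gcongr
    _ = ENNReal.ofReal ((1 - ε) ^ lexrTestSize ε δ i) := by
        rw [← ENNReal.ofReal_one, ← ENNReal.ofReal_sub _ hε.1.le,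
          ENNReal.ofReal_pow (by linarith [hε.2])]
    _ ≤ ENNReal.ofReal (δ / 2 ^ i) :=
        ENNReal.ofReal_le_ofReal (_root_.one_sub_pow_lexrTestSize_le hε hδ i)

lemma sum_range_div_two_pow_succ_le {δ : ℝ} (hδ : 0 ≤ δ) (m : ℕ) :
    ∑ i ∈ Finset.range m, δ / 2 ^ (i + 1) ≤ δ :=
  calc ∑ i ∈ Finset.range m, δ / 2 ^ (i + 1)
        = δ / 2 * ∑ i ∈ Finset.range m, (1 / 2 : ℝ) ^ i := by
        rw [Finset.mul_sum]; congr 1 with i; rw [one_div_pow, pow_succ]; field_simp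
    _ ≤ δ / 2 * 2 := by gcongr; exact sum_geometric_two_le m
    _ = δ := by ring

lemma measure_pi_forall_notMem {Ω : Type*} [MeasurableSpace Ω] (μ : Measure Ω)
    [IsProbabilityMeasure μ] {S : Set Ω} (hS : MeasurableSet S) (n : ℕ) :
    Measure.pi (fun _ : Fin n => μ) {ω | ∀ k, ω k ∉ S} = (1 - μ S) ^ n := by
  have hcyl : {ω : Fin n → Ω | ∀ k, ω k ∉ S} = Set.univ.pi fun _ => Sᶜ := by ext; simp
  rw [hcyl, Measure.pi_pi, Finset.prod_const, Finset.card_univ, Fintype.card_fin,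
    prob_compl_eq_one_sub hS]

lemma measure_pi_pi_forall_notMem {Ω ι : Type*} [MeasurableSpace Ω] [Fintype ι] {n : ι → ℕ}
    (μ : Measure Ω) [IsProbabilityMeasure μ] {S : Set Ω} (hS : MeasurableSet S) (i : ι) :
    Measure.pi (fun j => Measure.pi fun _ : Fin (n j) => μ) {ω | ∀ k, ω i k ∉ S}
      = (1 - μ S) ^ n i := by
  have hmeas : MeasurableSet {f : Fin (n i) → Ω | ∀ k, f k ∉ S} := by measurability
  rw [← measure_pi_forall_notMem μ hS]
  exact (measurePreserving_eval (fun j => Measure.pi fun _ : Fin (n j) => μ) i).measure_preimage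
    hmeas.nullMeasurableSet

theorem lexr_pac_guarantee_general {α : Type*}
    (μ : Measure (List α)) [IsProbabilityMeasure μ]
    (ε δ : ℝ) (hε : ε ∈ Set.Ioo (0 : ℝ) 1) (hδ : δ ∈ Set.Ioo (0 : ℝ) 1)
    (m : ℕ)
    (r : ℕ → ℕ)
    (hr : ∀ i : ℕ, 1 ≤ i → i ≤ m →
      r i = ⌈(1 / ε) * ((i : ℝ) * Real.log 2 - Real.log δ)⌉₊)
    (T : Set (List α)) (H : ℕ → Set (List α)) :
    (Measure.pi (fun i : Fin m => Measure.pi (fun _ : Fin (r (i.1 + 1)) => μ)))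
      {ω : (i : Fin m) → Fin (r (i.1 + 1)) → List α |
        ∃ i : Fin m,
          ENNReal.ofReal ε ≤ μ (symmDiff (H (i.1 + 1)) T) ∧
          ∀ k : Fin (r (i.1 + 1)), ω i k ∉ symmDiff (H (i.1 + 1)) T}
      ≤ ENNReal.ofReal δ := by
  set P := Measure.pi (fun i : Fin m => Measure.pi (fun _ : Fin (r (i.1 + 1)) => μ))
  set S : Fin m → Set (List α) := fun i => symmDiff (H (i.1 + 1)) T
  have hround (i : Fin m) : P {ω | ENNReal.ofReal ε ≤ μ (S i) ∧ ∀ k, ω i k ∉ S i}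
      ≤ ENNReal.ofReal (δ / 2 ^ (i.1 + 1)) := by
    by_cases hbad : ENNReal.ofReal ε ≤ μ (S i)
    · have hsize : r (i.1 + 1) = lexrTestSize ε δ (i.1 + 1) := hr _ i.1.succ_pos i.2
      simp only [hbad, true_and]
      rw [measure_pi_pi_forall_notMem μ MeasurableSpace.measurableSet_top i, hsize]
      exact ENNReal.one_sub_pow_lexrTestSize_le hε hδ.1 hbad _
    · simp [hbad]
  calc P _ = P (⋃ i, {ω | ENNReal.ofReal ε ≤ μ (S i) ∧ ∀ k, ω i k ∉ S i}) := by
        rw [Set.ofPred_exists]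
    _ ≤ ∑ i, P {ω | ENNReal.ofReal ε ≤ μ (S i) ∧ ∀ k, ω i k ∉ S i} :=
        measure_iUnion_fintype_le _ _
    _ ≤ ∑ i : Fin m, ENNReal.ofReal (δ / 2 ^ (i.1 + 1)) := Finset.sum_le_sum fun i _ => hround i
    _ = ENNReal.ofReal (∑ i ∈ Finset.range m, δ / 2 ^ (i + 1)) := by
        rw [← ENNReal.ofReal_sum_of_nonneg fun i _ => div_nonneg hδ.1.le (by positivity),
          Fin.sum_univ_eq_sum_range (fun i => δ / 2 ^ (i + 1))]
    _ ≤ ENNReal.ofReal δ := ENNReal.ofReal_le_ofReal (sum_range_div_two_pow_succ_le hδ.1.le m)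

/-- The PAC guarantee of LEXR: the probability that some hypothesis `H i`
(for a round `i ∈ {1,…,m}`) whose explanation error `μ (H i ∆ T)` is at least `ε`
nevertheless passes all `r i` random tests of its round is at most `δ`. -/
theorem lexr_pac_guarantee {α : Type*} [Fintype α] [Nonempty α]
    (μ : Measure (List α)) [IsProbabilityMeasure μ]
    (ε δ : ℝ) (hε : ε ∈ Set.Ioo (0 : ℝ) 1) (hδ : δ ∈ Set.Ioo (0 : ℝ) 1)
    (m : ℕ) (hm : 1 ≤ m)
    (r : ℕ → ℕ)
    (hr : ∀ i : ℕ, 1 ≤ i → i ≤ m →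
      r i = ⌈(1 / ε) * ((i : ℝ) * Real.log 2 - Real.log δ)⌉₊)
    (T : Set (List α)) (H : ℕ → Set (List α)) :
    (Measure.pi (fun i : Fin m => Measure.pi (fun _ : Fin (r (i.1 + 1)) => μ)))
      {ω : (i : Fin m) → Fin (r (i.1 + 1)) → List α |
        ∃ i : Fin m,
          ENNReal.ofReal ε ≤ μ (symmDiff (H (i.1 + 1)) T) ∧
          ∀ k : Fin (r (i.1 + 1)), ω i k ∉ symmDiff (H (i.1 + 1)) T}
      ≤ ENNReal.ofReal δ :=
  lexr_pac_guarantee_general μ ε δ hε hδ m r hr T H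
end

section
/- Let Σ be a nonempty finite type. Let P and N be finite sets of finite words over Σ (P, N : Finset (List Σ)) with P ∩ N = ∅ (a sample of positive and negative examples). Call an LTL formula φ consistent with the sample if every u ∈ P satisfies sat u φ and no u ∈ N satisfies sat u φ. Then a consistent formula exists, and moreover there exists a consistent formula φ of minimal size: for every consistent formula ψ, |φ| ≤ |ψ|, where |φ| denotes the number of distinct subformulas of φ. -/
/-
A finite set of words is LTL-definable: a word `u = a₁ ⋯ aₙ` is pinned down by the formula
`a₁ ∧ X (a₂ ∧ X (⋯ (aₙ ∧ ¬X ⊤)))`, and `P` is defined by the disjunction of these formulas over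
its words. Since `P` and `N` are disjoint, such a formula is consistent with the sample, and
a consistent formula of minimal size exists because `ℕ` is well-ordered.
-/

open scoped Classical

/-- LTL formulas over an alphabet `α`, interpreted on finite words:
`φ ::= a | ¬φ | φ ∨ φ | X φ | φ U φ`. -/
inductive LTLFormula (α : Type*) : Type _ where
  | atom : α → LTLFormula α
  | not : LTLFormula α → LTLFormula α
  | or : LTLFormula α → LTLFormula α → LTLFormula α
  | next : LTLFormula α → LTLFormula α
  | until : LTLFormula α → LTLFormula α → LTLFormula α

/-- Satisfaction of an LTL formula by a finite word. -/
def sat {α : Type*} : List α → LTLFormula α → Prop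
  | u, .atom a => u.head? = some a
  | u, .not φ => ¬ sat u φ
  | u, .or φ ψ => sat u φ ∨ sat u ψ
  | [], .next _ => False
  | _ :: t, .next φ => t ≠ [] ∧ sat t φ
  | [], .until _ _ => False
  | b :: t, .until φ ψ =>
      sat (b :: t) ψ ∨ (sat (b :: t) φ ∧ t ≠ [] ∧ sat t (.until φ ψ))
termination_by u φ => (u.length, sizeOf φ)

/-- The set of subformulas of an LTL formula: the formula itself together with
the subformulas of its immediate subterms. -/
def subformulas {α : Type*} : LTLFormula α → Set (LTLFormula α)
  | .atom a => {.atom a}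
  | .not φ => insert (.not φ) (subformulas φ)
  | .or φ ψ => insert (.or φ ψ) (subformulas φ ∪ subformulas ψ)
  | .next φ => insert (.next φ) (subformulas φ)
  | .until φ ψ => insert (.until φ ψ) (subformulas φ ∪ subformulas ψ)

/-- The size of an LTL formula: the number of its distinct subformulas. -/
noncomputable def formulaSize {α : Type*} (φ : LTLFormula α) : ℕ :=
  (subformulas φ).ncard

namespace LTLFormula

variable {α : Type*}

def and (φ ψ : LTLFormula α) : LTLFormula α := .not (.or (.not φ) (.not ψ))

noncomputable def top (α : Type*) [Nonempty α] : LTLFormula α :=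
  .or (.atom (Classical.arbitrary α)) (.not (.atom (Classical.arbitrary α)))

noncomputable def bot (α : Type*) [Nonempty α] : LTLFormula α := .not (top α)

noncomputable def nonempty (α : Type*) [Nonempty α] : LTLFormula α := .until (top α) (top α)

noncomputable def ofWord [Nonempty α] : List α → LTLFormula α
  | [] => .not (nonempty α)
  | [a] => .and (.atom a) (.not (.next (top α)))
  | a :: b :: t => .and (.atom a) (.next (ofWord (b :: t)))

noncomputable def disj [Nonempty α] : List (LTLFormula α) → LTLFormula α
  | [] => bot α
  | φ :: l => .or φ (disj l)

end LTLFormula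

open LTLFormula

section Semantics

variable {α : Type*}

@[simp] theorem sat_and (u : List α) (φ ψ : LTLFormula α) :
    sat u (φ.and ψ) ↔ sat u φ ∧ sat u ψ := by
  simp [LTLFormula.and, sat]

variable [Nonempty α]

@[simp] theorem sat_top (u : List α) : sat u (top α) := by
  simp only [top, sat]
  exact em _

@[simp] theorem not_sat_bot (u : List α) : ¬ sat u (bot α) := by
  simp [bot, sat]

@[simp] theorem sat_nonempty (u : List α) : sat u (nonempty α) ↔ u ≠ [] := by
  cases u <;> simp [LTLFormula.nonempty, sat]

theorem sat_ofWord_iff (u v : List α) : sat v (ofWord u) ↔ v = u := by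
  induction u generalizing v with
  | nil => simp [ofWord, sat]
  | cons a t ih =>
    rcases t with _ | ⟨b, t⟩ <;> rcases v with _ | ⟨c, _ | ⟨d, w⟩⟩ <;>
      simp_all [ofWord, sat]

theorem sat_disj_iff (u : List α) (l : List (LTLFormula α)) :
    sat u (disj l) ↔ ∃ φ ∈ l, sat u φ := by
  induction l with
  | nil => simp [disj]
  | cons φ l ih => simp [disj, sat, ih]

theorem exists_sat_iff_mem (P : Finset (List α)) : ∃ φ : LTLFormula α, ∀ u, sat u φ ↔ u ∈ P :=
  ⟨disj (P.toList.map ofWord), fun u => by simp [sat_disj_iff, sat_ofWord_iff]⟩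

end Semantics

def IsConsistent {α : Type*} (P N : Finset (List α)) (φ : LTLFormula α) : Prop :=
  (∀ u ∈ P, sat u φ) ∧ (∀ u ∈ N, ¬ sat u φ)

theorem exists_isConsistent {α : Type*} [Nonempty α] {P N : Finset (List α)}
    (hPN : Disjoint P N) : ∃ φ, IsConsistent P N φ := by
  obtain ⟨φ, hφ⟩ := exists_sat_iff_mem P
  exact ⟨φ, fun u hu => (hφ u).2 hu,
    fun u hu hsat => Finset.disjoint_left.1 hPN ((hφ u).1 hsat) hu⟩

theorem minimal_consistent_formula_exists_general {α : Type*} [Nonempty α]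
    (P N : Finset (List α)) (hPN : P ∩ N = ∅) :
    ∃ φ : LTLFormula α,
      ((∀ u ∈ P, sat u φ) ∧ (∀ u ∈ N, ¬ sat u φ)) ∧
      ∀ ψ : LTLFormula α,
        ((∀ u ∈ P, sat u ψ) ∧ (∀ u ∈ N, ¬ sat u ψ)) →
        formulaSize φ ≤ formulaSize ψ := by
  have hne : {φ | IsConsistent P N φ}.Nonempty :=
    exists_isConsistent (Finset.disjoint_iff_inter_eq_empty.2 hPN)
  exact ⟨Function.argminOn formulaSize _ hne, Function.argminOn_mem formulaSize _ hne,
    fun ψ hψ => Function.argminOn_le formulaSize {φ | IsConsistent P N φ} hψ⟩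

/-- Given a sample of positive examples `P` and negative examples `N` with
`P ∩ N = ∅`, a consistent LTL formula exists, and moreover there is a
consistent formula of minimal size among all consistent formulas. -/
theorem minimal_consistent_formula_exists {α : Type*} [Fintype α] [Nonempty α]
    (P N : Finset (List α)) (hPN : P ∩ N = ∅) :
    ∃ φ : LTLFormula α,
      ((∀ u ∈ P, sat u φ) ∧ (∀ u ∈ N, ¬ sat u φ)) ∧
      ∀ ψ : LTLFormula α,
        ((∀ u ∈ P, sat u ψ) ∧ (∀ u ∈ N, ¬ sat u ψ)) →
        formulaSize φ ≤ formulaSize ψ :=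
  minimal_consistent_formula_exists_general P N hPN
end
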